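/- arXiv:1806.04339 — 5 statements merged into one kernel-verified Lean document; each statement's English description precedes it below -/
import Mathlib

section
/- Let w* in R^d satisfy y_i·(w*)ᵀx_i > 0 for all samples i. Then for the ReLU exponential loss L(w) = (1/n)∑_i exp(-y_i·max(0, wᵀx_i)), we have L(αw*) → n⁻/n as α → +∞, where n⁻ is the number of samples with label -1. -/
/-!
Along the ray `α w*` the margin of sample `i` is `α c_i` with `y_i c_i > 0`. A positive sample
has `c_i > 0`, so its ReLU output grows without bound and its loss term `exp (-σ(α c_i))` tends
to `0`. A negative sample has `c_i < 0`, so its ReLU output is eventually `0` and its loss term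
`exp 0 = 1` never improves. Averaging gives `n⁻ / n`.
-/

open Filter Finset Real

theorem tendsto_max_zero_mul_atTop {c : ℝ} (hc : 0 < c) :
    Tendsto (fun α : ℝ => max 0 (α * c)) atTop atTop :=
  tendsto_atTop_mono (fun _ => le_max_right _ _) (tendsto_id.atTop_mul_const hc)

theorem max_zero_mul_eventually_eq_zero {c : ℝ} (hc : c ≤ 0) :
    ∀ᶠ α : ℝ in atTop, max 0 (α * c) = 0 := by
  filter_upwards [eventually_ge_atTop 0] with α hα
  exact max_eq_left (mul_nonpos_of_nonneg_of_nonpos hα hc)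

theorem tendsto_exp_neg_mul_max_zero_mul {y c : ℝ} (hy : y = 1 ∨ y = -1) (hyc : 0 < y * c) :
    Tendsto (fun α : ℝ => exp (-y * max 0 (α * c))) atTop
      (nhds (if y = -1 then 1 else 0)) := by
  rcases hy with rfl | rfl
  · have hc : 0 < c := by simpa using hyc
    rw [if_neg (by norm_num)]
    simpa [Function.comp_def] using
      tendsto_exp_atBot.comp (tendsto_neg_atTop_atBot.comp (tendsto_max_zero_mul_atTop hc))
  · have hc : c ≤ 0 := by linarith
    refine tendsto_const_nhds.congr' ?_
    filter_upwards [max_zero_mul_eventually_eq_zero hc] with α hα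
    simp [hα]

theorem relu_loss_tendsto_global_min_general
    {d n : ℕ}
    (x : Fin n → EuclideanSpace ℝ (Fin d)) (y : Fin n → ℝ)
    (hy : ∀ i, y i = 1 ∨ y i = -1)
    (w : EuclideanSpace ℝ (Fin d))
    (hw : ∀ i, 0 < y i * (inner ℝ w (x i) : ℝ)) :
    Tendsto
      (fun α : ℝ =>
        (1 / (n : ℝ)) * ∑ i, Real.exp (-(y i) * max 0 ((inner ℝ (α • w) (x i) : ℝ))))
      atTop
      (nhds (((Finset.univ.filter fun i => y i = -1).card : ℝ) / n)) := by
  have hterm (i : Fin n) := tendsto_exp_neg_mul_max_zero_mul (hy i) (hw i)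
  have hsum := (tendsto_finsetSum univ fun i _ => hterm i).const_mul (1 / (n : ℝ))
  simp only [sum_boole, ← real_inner_smul_left] at hsum
  convert hsum using 2
  ring

/-- If `y i * ⟪w*, x i⟫ > 0` for all samples, then the ReLU exponential
loss `L(α w*) → n⁻/n` as `α → +∞`. -/
theorem relu_loss_tendsto_global_min
    {d n : ℕ} (hn : 0 < n)
    (x : Fin n → EuclideanSpace ℝ (Fin d)) (y : Fin n → ℝ)
    (hy : ∀ i, y i = 1 ∨ y i = -1)
    (w : EuclideanSpace ℝ (Fin d))
    (hw : ∀ i, 0 < y i * (inner ℝ w (x i) : ℝ)) :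
    Tendsto
      (fun α : ℝ =>
        (1 / (n : ℝ)) * ∑ i, Real.exp (-(y i) * max 0 ((inner ℝ (α • w) (x i) : ℝ))))
      atTop
      (nhds (((Finset.univ.filter fun i => y i = -1).card : ℝ) / n)) :=
  relu_loss_tendsto_global_min_general x y hy w hw
end

section
/- Consider two data samples x_1 (label +1) and x_2 (label -1) in R^d with 0 < x_1ᵀx_2 ≤ (1/2)‖x_2‖². Suppose at iterate w_t we have w_tᵀx_1 > 0 and w_tᵀx_2 > 0, and w_{t+1} = w_t + η exp(-w_tᵀx_1)x_1 - η exp(w_tᵀx_2)x_2 (the gradient step on L(w) = exp(-wᵀx_1) + exp(wᵀx_2)). Then w_{t+1}ᵀx_2 - w_tᵀx_2 ≤ -0.5 η ‖x_2‖². Consequently the sequence {w_tᵀx_2} decreases by at least a constant per step while both samples are activated, so within finitely many steps w_tᵀx_2 ≤ 0. -/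
open Real
open scoped RealInnerProductSpace

lemma inner_add_smul_sub_smul_sub_inner {E : Type*} [NormedAddCommGroup E]
    [InnerProductSpace ℝ E] (w x₁ x₂ : E) (a b : ℝ) :
    ⟪w + a • x₁ - b • x₂, x₂⟫ - ⟪w, x₂⟫ = a * ⟪x₁, x₂⟫ - b * ‖x₂‖ ^ 2 := by
  rw [inner_sub_left, inner_add_left, real_inner_smul_left, real_inner_smul_left,
    real_inner_self_eq_norm_sq]
  ring

/-- one GD step on `L(w) = exp(-wᵀx₁) + exp(wᵀx₂)` with both samples
activated decreases `wᵀx₂` by at least `0.5 η ‖x₂‖²`, provided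
`0 < x₁ᵀx₂ ≤ 0.5 ‖x₂‖²`. -/
theorem gd_step_decreases_negative_sample_margin
    {d : ℕ} (x₁ x₂ w wnext : EuclideanSpace ℝ (Fin d)) (η : ℝ)
    (hη : 0 < η)
    (h12pos : 0 < (inner ℝ x₁ x₂ : ℝ))
    (h12le : (inner ℝ x₁ x₂ : ℝ) ≤ (1 / 2) * ‖x₂‖ ^ 2)
    (hw1 : 0 < (inner ℝ w x₁ : ℝ))
    (hw2 : 0 < (inner ℝ w x₂ : ℝ))
    (hupd : wnext = w + (η * Real.exp (-(inner ℝ w x₁ : ℝ))) • x₁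
      - (η * Real.exp ((inner ℝ w x₂ : ℝ))) • x₂) :
    (inner ℝ wnext x₂ : ℝ) - (inner ℝ w x₂ : ℝ) ≤ -(0.5 * η * ‖x₂‖ ^ 2) := by
  subst hupd
  rw [inner_add_smul_sub_smul_sub_inner]
  have hexp₁ : exp (-⟪w, x₁⟫) ≤ 1 := exp_le_one_iff.2 (by linarith)
  have hexp₂ : 1 ≤ exp ⟪w, x₂⟫ := one_le_exp_iff.2 hw2.le
  calc η * exp (-⟪w, x₁⟫) * ⟪x₁, x₂⟫ - η * exp ⟪w, x₂⟫ * ‖x₂‖ ^ 2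
      ≤ η * 1 * ⟪x₁, x₂⟫ - η * 1 * ‖x₂‖ ^ 2 := by gcongr
    _ ≤ -(0.5 * η * ‖x₂‖ ^ 2) := by nlinarith
end

section
/- Let L(w) = (1/m)∑_{i=1}^m exp(-wᵀx_i), and let ℓ(w) ∈ R^m be the vector with entries exp(-wᵀx_i). Let γ = max_{‖u‖=1} min_i x_iᵀu > 0. Then ‖∇L(w)‖ ≥ γ · L(w) for every w, i.e., the normalized gradient magnitude ‖Xᵀℓ(w)‖/‖ℓ(w)‖₁ is at least the max-margin γ. -/
open Filter Finset Real

section MarginDuality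

variable {ι E : Type*} [NormedAddCommGroup E] [InnerProductSpace ℝ E]

theorem mul_sum_le_inner_sum_smul (s : Finset ι) (a : ι → ℝ) (ha : ∀ i ∈ s, 0 ≤ a i)
    (x : ι → E) (u : E) {γ : ℝ} (hmargin : ∀ i ∈ s, γ ≤ inner ℝ u (x i)) :
    γ * ∑ i ∈ s, a i ≤ inner ℝ u (∑ i ∈ s, a i • x i) := by
  rw [inner_sum, Finset.mul_sum]
  refine Finset.sum_le_sum fun i hi => ?_
  rw [real_inner_smul_right, mul_comm γ]
  exact mul_le_mul_of_nonneg_left (hmargin i hi) (ha i hi)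

/-- Weak duality: a margin `γ` in some direction `u` bounds `‖Xᵀq‖` below by `γ ‖q‖₁`
for every nonnegative weight vector `q`. -/
theorem mul_sum_le_norm_sum_smul (s : Finset ι) (a : ι → ℝ) (ha : ∀ i ∈ s, 0 ≤ a i)
    (x : ι → E) {u : E} (hu : ‖u‖ ≤ 1) {γ : ℝ} (hmargin : ∀ i ∈ s, γ ≤ inner ℝ u (x i)) :
    γ * ∑ i ∈ s, a i ≤ ‖∑ i ∈ s, a i • x i‖ :=
  calc γ * ∑ i ∈ s, a i ≤ inner ℝ u (∑ i ∈ s, a i • x i) :=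
        mul_sum_le_inner_sum_smul s a ha x u hmargin
    _ ≤ ‖u‖ * ‖∑ i ∈ s, a i • x i‖ := real_inner_le_norm _ _
    _ ≤ ‖∑ i ∈ s, a i • x i‖ := mul_le_of_le_one_left (norm_nonneg _) hu

end MarginDuality

theorem grad_norm_ge_margin_times_loss_general
    {d m : ℕ}
    (x : Fin m → EuclideanSpace ℝ (Fin d)) (γ : ℝ)
    (u : EuclideanSpace ℝ (Fin d)) (hu : ‖u‖ = 1)
    (hmargin : ∀ i, γ ≤ (inner ℝ u (x i) : ℝ))
    (w : EuclideanSpace ℝ (Fin d)) :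
    γ * ((1 / (m : ℝ)) * ∑ i, Real.exp (-(inner ℝ w (x i) : ℝ)))
      ≤ ‖-(1 / (m : ℝ)) • ∑ i, Real.exp (-(inner ℝ w (x i) : ℝ)) • x i‖ := by
  have hduality := mul_sum_le_norm_sum_smul Finset.univ (fun i => Real.exp (-(inner ℝ w (x i))))
    (fun i _ => (Real.exp_pos _).le) x hu.le (fun i _ => hmargin i)
  rw [norm_smul, norm_neg, Real.norm_of_nonneg (by positivity), mul_left_comm]
  exact mul_le_mul_of_nonneg_left hduality (by positivity)

/-- `‖∇L(w)‖ ≥ γ L(w)` for `L(w) = (1/m) ∑ exp(-wᵀx_i)` when the data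
has margin `γ > 0` witnessed by a unit vector `u` with `⟪u, x i⟫ ≥ γ` for all `i`.
Here `∇L(w) = -(1/m) ∑ exp(-wᵀx_i) • x_i`. -/
theorem grad_norm_ge_margin_times_loss
    {d m : ℕ} (hm : 0 < m)
    (x : Fin m → EuclideanSpace ℝ (Fin d)) (γ : ℝ) (hγ : 0 < γ)
    (u : EuclideanSpace ℝ (Fin d)) (hu : ‖u‖ = 1)
    (hmargin : ∀ i, γ ≤ (inner ℝ u (x i) : ℝ))
    (w : EuclideanSpace ℝ (Fin d)) :
    γ * ((1 / (m : ℝ)) * ∑ i, Real.exp (-(inner ℝ w (x i) : ℝ)))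
      ≤ ‖-(1 / (m : ℝ)) • ∑ i, Real.exp (-(inner ℝ w (x i) : ℝ)) • x i‖ :=
  grad_norm_ge_margin_times_loss_general x γ u hu hmargin w
end

section
/- Suppose the dataset satisfies: x_iᵀx_j > 0 whenever y_i = y_j, and x_iᵀx_j < 0 whenever y_i ≠ y_j. Consider one SGD step w_{t+1} = w_t + η exp(-y_ξ w_tᵀx_ξ) y_ξ x_ξ for some selected index ξ with activated sample (w_tᵀx_ξ > 0). Then for every sample j: if y_j = +1 then w_{t+1}ᵀx_j > w_tᵀx_j, and if y_j = -1 then w_{t+1}ᵀx_j < w_tᵀx_j. In particular, any sample correctly classified at step t (y_j w_tᵀx_j > 0) remains correctly classified at step t+1. -/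
open Real

/-! The step moves `w` by a positive multiple of `y_ξ x_ξ`, so `wᵀx_j` changes by a positive
multiple of `y_ξ ⟪x_ξ, x_j⟫`. The sign conditions say exactly that `y_j y_ξ ⟪x_ξ, x_j⟫ > 0` for
all `ξ, j`, hence every step increases every margin `y_j wᵀx_j`. -/

section SignAligned

variable {E ι : Type*} [NormedAddCommGroup E] [InnerProductSpace ℝ E] {x : ι → E} {y : ι → ℝ}

lemma label_mul_label_mul_inner_pos (hy : ∀ i, y i = 1 ∨ y i = -1)
    (hsame : ∀ i j, y i = y j → 0 < (inner ℝ (x i) (x j) : ℝ))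
    (hdiff : ∀ i j, y i ≠ y j → (inner ℝ (x i) (x j) : ℝ) < 0) (i j : ι) :
    0 < y j * (y i * inner ℝ (x i) (x j)) := by
  rcases hy i with hi | hi <;> rcases hy j with hj | hj <;> rw [hi, hj]
  · linarith [hsame i j (by rw [hi, hj])]
  · linarith [hdiff i j (by rw [hi, hj]; norm_num)]
  · linarith [hdiff i j (by rw [hi, hj]; norm_num)]
  · linarith [hsame i j (by rw [hi, hj])]

lemma label_mul_inner_step_sub_pos (hy : ∀ i, y i = 1 ∨ y i = -1)
    (hsame : ∀ i j, y i = y j → 0 < (inner ℝ (x i) (x j) : ℝ))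
    (hdiff : ∀ i j, y i ≠ y j → (inner ℝ (x i) (x j) : ℝ) < 0)
    (w : E) {c : ℝ} (hc : 0 < c) (i j : ι) :
    0 < y j * (inner ℝ (w + (c * y i) • x i) (x j) - inner ℝ w (x j)) := by
  have hgain : inner ℝ (w + (c * y i) • x i) (x j) - inner ℝ w (x j)
      = c * (y i * inner ℝ (x i) (x j)) := by
    rw [inner_add_left, real_inner_smul_left]
    ring
  rw [hgain, mul_left_comm]
  exact mul_pos hc (label_mul_label_mul_inner_pos hy hsame hdiff i j)

end SignAligned

theorem sgd_step_monotone_margins_general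
    {d n : ℕ}
    (x : Fin n → EuclideanSpace ℝ (Fin d)) (y : Fin n → ℝ)
    (hy : ∀ i, y i = 1 ∨ y i = -1)
    (hsame : ∀ i j, y i = y j → 0 < (inner ℝ (x i) (x j) : ℝ))
    (hdiff : ∀ i j, y i ≠ y j → (inner ℝ (x i) (x j) : ℝ) < 0)
    (η : ℝ) (hη : 0 < η)
    (wt wnext : EuclideanSpace ℝ (Fin d)) (ξ : Fin n)
    (hupd : wnext = wt + (η * Real.exp (-(y ξ) * (inner ℝ wt (x ξ) : ℝ)) * y ξ) • x ξ) :
    (∀ j, y j = 1 → (inner ℝ wt (x j) : ℝ) < (inner ℝ wnext (x j) : ℝ)) ∧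
    (∀ j, y j = -1 → (inner ℝ wnext (x j) : ℝ) < (inner ℝ wt (x j) : ℝ)) ∧
    (∀ j, 0 < y j * (inner ℝ wt (x j) : ℝ) → 0 < y j * (inner ℝ wnext (x j) : ℝ)) := by
  have hgain (j : Fin n) : 0 < y j * (inner ℝ wnext (x j) - inner ℝ wt (x j)) :=
    hupd ▸ label_mul_inner_step_sub_pos hy hsame hdiff wt (mul_pos hη (exp_pos _)) ξ j
  refine ⟨fun j hj => ?_, fun j hj => ?_, fun j hj => ?_⟩
  · linarith [hj ▸ hgain j]
  · linarith [hj ▸ hgain j]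
  · linarith [hgain j, mul_sub (y j) (inner ℝ wnext (x j)) (inner ℝ wt (x j))]

/-- under the pairwise sign conditions on inner products, one SGD step on
an activated sample strictly increases `wᵀx_j` for positive samples and strictly
decreases it for negative samples; hence correctly classified samples stay correct. -/
theorem sgd_step_monotone_margins
    {d n : ℕ}
    (x : Fin n → EuclideanSpace ℝ (Fin d)) (y : Fin n → ℝ)
    (hy : ∀ i, y i = 1 ∨ y i = -1)
    (hsame : ∀ i j, y i = y j → 0 < (inner ℝ (x i) (x j) : ℝ))
    (hdiff : ∀ i j, y i ≠ y j → (inner ℝ (x i) (x j) : ℝ) < 0)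
    (η : ℝ) (hη : 0 < η)
    (wt wnext : EuclideanSpace ℝ (Fin d)) (ξ : Fin n)
    (hact : 0 < (inner ℝ wt (x ξ) : ℝ))
    (hupd : wnext = wt + (η * Real.exp (-(y ξ) * (inner ℝ wt (x ξ) : ℝ)) * y ξ) • x ξ) :
    (∀ j, y j = 1 → (inner ℝ wt (x j) : ℝ) < (inner ℝ wnext (x j) : ℝ)) ∧
    (∀ j, y j = -1 → (inner ℝ wnext (x j) : ℝ) < (inner ℝ wt (x j) : ℝ)) ∧
    (∀ j, 0 < y j * (inner ℝ wt (x j) : ℝ) → 0 < y j * (inner ℝ wnext (x j) : ℝ)) :=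
  sgd_step_monotone_margins_general x y hy hsame hdiff η hη wt wnext ξ hupd
end

section
/- Let L(w) = (1/m)∑_i exp(-wᵀx_i) with ‖x_i‖ ≤ B < √2 and margin direction ŵ with ŵᵀx_i ≥ γ > 0 for all i. Let w_t be SGD iterates with stepsizes η_k = (k+1)^{-α}, 1/2 < α < 1, that remain in the region where all wᵀx_i ≥ 0. Setting u = (ln t/γ)ŵ, combining E‖w_t − u‖² ≤ ‖w_0‖² + ln²t/γ² + (2/(1−α))t^{-α} − (2 − B²)∑_{k=0}^{t-1}η_k E L(w_k) with the lower bound E‖w_t − u‖² ≥ (w_0ᵀŵ + γ∑_{k=0}^{t-1}η_k E L(w_k) − ln t/γ)², one obtains ∑_{k=0}^{t-1}η_k E L(w_k) = O(ln t / γ²). -/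
open Filter Finset Real

set_option maxHeartbeats 1000000 in
/-- let `a k = E L(w_k) ≥ 0` and `S t = ∑_{k<t} η_k a_k` with
`η_k = (k+1)^{-α}`, `1/2 < α < 1`. Combining the upper bound
`E‖w_t - u‖² ≤ ‖w_0‖² + ln²t/γ² + (2/(1-α)) t^{-α} - (2 - B²) S t` with the lower bound
`E‖w_t - u‖² ≥ (w_0ᵀŵ + γ S t - ln t/γ)²` (both encoded as the combined quadratic
inequality hypothesis) yields `S t = O(ln t / γ²)`. -/
theorem sgd_weighted_loss_sum_log_bound
    (a η : ℕ → ℝ) (α B γ w0norm w0dot : ℝ)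
    (hα₁ : 1 / 2 < α) (hα₂ : α < 1)
    (hη : ∀ k, η k = ((k : ℝ) + 1) ^ (-α))
    (hB₀ : 0 < B) (hB : B ^ 2 < 2) (hγ : 0 < γ)
    (ha : ∀ k, 0 ≤ a k)
    (hquad : ∀ t : ℕ, 1 ≤ t →
      (w0dot + γ * ∑ k ∈ Finset.range t, η k * a k - Real.log t / γ) ^ 2
        ≤ w0norm ^ 2 + (Real.log t) ^ 2 / γ ^ 2 + (2 / (1 - α)) * (t : ℝ) ^ (-α)
          - (2 - B ^ 2) * ∑ k ∈ Finset.range t, η k * a k) :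
    ∃ C > 0, ∀ t : ℕ, 2 ≤ t →
      ∑ k ∈ Finset.range t, η k * a k ≤ C * Real.log t / γ ^ 2 := by
  have hα : 0 < 1 - α := by linarith
  set c : ℝ := 2 / (1 - α) with hc
  have hc0 : 0 ≤ c := by positivity
  clear_value c
  set K : ℝ := |w0norm| + |w0dot| + Real.sqrt c with hK
  have hK0 : 0 ≤ K := by positivity
  clear_value K
  have hlog2 : 0 < Real.log 2 := Real.log_pos one_lt_two
  refine ⟨2 + K * γ / Real.log 2, by positivity, ?_⟩
  intro t ht
  have ht1 : (1 : ℝ) ≤ (t : ℝ) := by exact_mod_cast Nat.one_le_of_lt ht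
  set S := ∑ k ∈ Finset.range t, η k * a k with hSdef
  have hS0 : 0 ≤ S := by
    apply Finset.sum_nonneg
    intro k _
    have : 0 < η k := by rw [hη]; positivity
    exact mul_nonneg this.le (ha k)
  have hq := hquad t (le_trans (by norm_num) ht)
  rw [← hSdef] at hq
  clear_value S
  have hLlog2 : Real.log 2 ≤ Real.log t :=
    Real.log_le_log (by norm_num) (by exact_mod_cast ht)
  set L := Real.log t with hLdef
  clear_value L
  have hL0 : 0 < L := lt_of_lt_of_le hlog2 hLlog2
  have hpow : (t : ℝ) ^ (-α) ≤ 1 :=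
    Real.rpow_le_one_of_one_le_of_nonpos ht1 (by linarith)
  have hpow0 : 0 ≤ (t : ℝ) ^ (-α) := Real.rpow_nonneg (by linarith) _
  have hcc : c * (t : ℝ) ^ (-α) ≤ c := by nlinarith
  have hY : (w0dot + γ * S - L / γ) ^ 2 ≤ w0norm ^ 2 + L ^ 2 / γ ^ 2 + c := by
    have hb := mul_nonneg (by nlinarith : (0:ℝ) ≤ 2 - B ^ 2) hS0
    linarith
  clear hq hquad hη ha hpow hpow0 hcc hSdef hLdef
  set M : ℝ := |w0norm| + L / γ + Real.sqrt c with hM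
  have hM0 : 0 ≤ M := by positivity
  clear_value M
  have hsq : Real.sqrt c ^ 2 = c := Real.sq_sqrt hc0
  have habs : |w0norm| ^ 2 = w0norm ^ 2 := sq_abs _
  have hDM : w0norm ^ 2 + L ^ 2 / γ ^ 2 + c ≤ M ^ 2 := by
    have h2 : 0 ≤ L / γ := by positivity
    have expand : M ^ 2 = |w0norm| ^ 2 + (L / γ) ^ 2 + Real.sqrt c ^ 2
        + 2 * |w0norm| * (L / γ) + 2 * |w0norm| * Real.sqrt c
        + 2 * (L / γ) * Real.sqrt c := by rw [hM]; ring
    rw [habs, hsq, div_pow] at expand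
    rw [expand]
    have p1 := mul_nonneg (abs_nonneg w0norm) h2
    have p2 := mul_nonneg (abs_nonneg w0norm) (Real.sqrt_nonneg c)
    have p3 := mul_nonneg h2 (Real.sqrt_nonneg c)
    linarith
  have hY2 : (w0dot + γ * S - L / γ) ^ 2 ≤ M ^ 2 := le_trans hY hDM
  have hYM : w0dot + γ * S - L / γ ≤ M := (abs_le_of_sq_le_sq' hY2 hM0).2
  have key : γ * S ≤ 2 * (L / γ) + K := by
    have h1 := neg_abs_le w0dot
    have h2 : M = |w0norm| + L / γ + Real.sqrt c := hM
    have h3 : K = |w0norm| + |w0dot| + Real.sqrt c := hK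
    linarith
  have hdiv : K * γ ≤ K * γ / Real.log 2 * L := by
    rw [div_mul_eq_mul_div, le_div_iff₀ hlog2]
    exact mul_le_mul_of_nonneg_left hLlog2 (mul_nonneg hK0 hγ.le)
  rw [div_eq_mul_inv, ← div_eq_mul_inv, le_div_iff₀ (by positivity : (0:ℝ) < γ ^ 2)]
  have hkey2 : γ ^ 2 * S ≤ 2 * L + K * γ := by
    have h := mul_le_mul_of_nonneg_left key hγ.le
    have h5 : γ * (2 * (L / γ)) = 2 * L := by field_simp
    nlinarith
  nlinarith [hkey2, hdiv]
end
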